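/- arXiv:2401.14219 — 3 statements merged into one kernel-verified Lean document; each statement's English description precedes it below -/
import Mathlib

section
/- Let hatγ_t, hatγ_r, a_r, a_t, λ, β_r, P, σ₀² > 0 be real numbers with a_t > hatγ_t·a_r and hatγ_t/(a_t − hatγ_t·a_r) ≤ hatγ_r/a_r. Then for all reals x ≥ 0, w ≥ 0, y ≥ 0, the disjunction [ a_t·λ·β_r·P·x/(a_r·λ·β_r·P·x + λ·β_r·w + σ₀²) ≤ hatγ_t ] OR [ a_r·λ·β_r·P·x/(λ·β_r·w + y·P + σ₀²) ≤ hatγ_r ] holds if and only if x ≤ (hatγ_r/(a_r·P))·( w + y·P/(λ·β_r) + σ₀²/(λ·β_r) ). -/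
/-! The SINR condition for decoding the weak user's signal is the stronger one: under the threshold
condition `γt / (a_t - γt a_r) ≤ γr / a_r`, failing it forces the strong user's own SINR below `γr`,
so the union of the two outage events is just the second one, which is linear in `x`. -/

theorem own_outage_of_sic_outage {γt γr a_r a_t s N₁ N₂ : ℝ} (har : 0 < a_r) (hγr : 0 ≤ γr)
    (hgt : γt * a_r < a_t) (hthr : γt / (a_t - γt * a_r) ≤ γr / a_r)
    (hN₁ : 0 ≤ N₁) (hN : N₁ ≤ N₂) (h : a_t * s ≤ γt * (a_r * s + N₁)) :
    a_r * s ≤ γr * N₂ := by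
  have hd : 0 < a_t - γt * a_r := sub_pos.mpr hgt
  have hs : s ≤ γt / (a_t - γt * a_r) * N₁ := by
    rw [div_mul_eq_mul_div, le_div_iff₀' hd]
    linarith
  calc a_r * s ≤ a_r * (γr / a_r * N₁) := by gcongr; exact hs.trans (by gcongr)
    _ = γr * N₁ := by field_simp
    _ ≤ γr * N₂ := by gcongr

theorem stmt_2_general (γt γr a_r a_t lam βr P σ0sq : ℝ)
    (hγr : 0 < γr) (har : 0 < a_r)
    (hlam : 0 < lam) (hβr : 0 < βr) (hP : 0 < P) (hσ0 : 0 < σ0sq)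
    (hgt : γt * a_r < a_t)
    (hthr : γt / (a_t - γt * a_r) ≤ γr / a_r) :
    ∀ x w y : ℝ, 0 ≤ x → 0 ≤ w → 0 ≤ y →
      ((a_t * lam * βr * P * x / (a_r * lam * βr * P * x + lam * βr * w + σ0sq) ≤ γt ∨
        a_r * lam * βr * P * x / (lam * βr * w + y * P + σ0sq) ≤ γr)
        ↔ x ≤ γr / (a_r * P) * (w + y * P / (lam * βr) + σ0sq / (lam * βr))) := by
  intro x w y hx hw hy
  have hD₁ : 0 < a_r * lam * βr * P * x + lam * βr * w + σ0sq := by positivity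
  have hD₂ : 0 < lam * βr * w + y * P + σ0sq := by positivity
  have hthreshold : γr / (a_r * P) * (w + y * P / (lam * βr) + σ0sq / (lam * βr))
      = γr * (lam * βr * w + y * P + σ0sq) / (a_r * lam * βr * P) := by
    field_simp
  rw [div_le_iff₀ hD₁, div_le_iff₀ hD₂, hthreshold, le_div_iff₀' (by positivity),
    or_iff_right_of_imp]
  intro hweak
  have hown := own_outage_of_sic_outage (s := lam * βr * P * x) (N₁ := lam * βr * w + σ0sq)
    (N₂ := lam * βr * w + y * P + σ0sq) har hγr.le hgt hthr (by positivity)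
    (by linarith [mul_nonneg hy hP.le]) (by linarith)
  linarith

/-- combination of the two outage sub-events of the strong user `U_r`
with imperfect SIC into a single threshold event on the channel gain
(step (A.1) → (A.2) in Appendix A). -/
theorem stmt_2 (γt γr a_r a_t lam βr P σ0sq : ℝ)
    (hγt : 0 < γt) (hγr : 0 < γr) (har : 0 < a_r) (hat : 0 < a_t)
    (hlam : 0 < lam) (hβr : 0 < βr) (hP : 0 < P) (hσ0 : 0 < σ0sq)
    (hgt : γt * a_r < a_t)
    (hthr : γt / (a_t - γt * a_r) ≤ γr / a_r) :
    ∀ x w y : ℝ, 0 ≤ x → 0 ≤ w → 0 ≤ y →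
      ((a_t * lam * βr * P * x / (a_r * lam * βr * P * x + lam * βr * w + σ0sq) ≤ γt ∨
        a_r * lam * βr * P * x / (lam * βr * w + y * P + σ0sq) ≤ γr)
        ↔ x ≤ γr / (a_r * P) * (w + y * P / (lam * βr) + σ0sq / (lam * βr))) :=
  stmt_2_general γt γr a_r a_t lam βr P σ0sq hγr har hlam hβr hP hσ0 hgt hthr
end

section
/- Let a_r, λ, β_r, σ₀², hatγ_r > 0, let X be a nonnegative almost-surely finite random variable, let W be a nonnegative random variable, and let Y be exponentially distributed with mean σ_re² > 0 and independent of X. Define γ(P) = a_r·λ·β_r·P·X/(λ·β_r·W + Y·P + σ₀²) for P > 0. Then: (i) γ(P) ≤ a_r·λ·β_r·X/Y for all P > 0; (ii) consequently Pr(γ(P) < hatγ_r) ≥ Pr(a_r·λ·β_r·X/Y < hatγ_r) for all P > 0; and (iii) the constant c = Pr(a_r·λ·β_r·X/Y < hatγ_r) is strictly positive, so the outage probability Pr(γ(P) < hatγ_r) is bounded below by a positive constant independent of the transmit power P. -/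
open MeasureTheory ProbabilityTheory Set

/-
The denominator `λβ_r W + Y P + σ₀²` is at least `Y P`, so the SINR never exceeds the
interference-limited ratio `a_r λ β_r X / Y`, whatever the power `P`; this gives (i) and (ii).
For (iii), pick `t` with `Pr(X ≤ t) > 0`; for a threshold `y₀` large enough, the event
`{X ≤ t, Y > y₀}` forces `a_r λ β_r X / Y < γ̂_r`, and by independence it has probability
`Pr(X ≤ t) · Pr(Y > y₀) > 0`, the exponential law charging every tail `(y₀, ∞)`.
-/

namespace ProbabilityTheory

variable {r : ℝ}

lemma expMeasure_Iic_zero (hr : 0 < r) : expMeasure r (Iic 0) = 0 := by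
  have := isProbabilityMeasure_expMeasure hr
  rw [← ofReal_cdf, cdf_expMeasure_eq hr]
  simp

lemma expMeasure_Ioi_pos (hr : 0 < r) (y : ℝ) : 0 < expMeasure r (Ioi y) := by
  have := isProbabilityMeasure_expMeasure hr
  have hIic : expMeasure r (Iic y) < 1 := by
    rw [← ofReal_cdf, cdf_expMeasure_eq hr, ENNReal.ofReal_lt_one]
    split_ifs
    · linarith [Real.exp_pos (-(r * y))]
    · exact zero_lt_one
  rw [← compl_Iic, prob_compl_eq_one_sub measurableSet_Iic]
  exact tsub_pos_of_lt hIic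

variable {Ω : Type*} [MeasurableSpace Ω] {μ : Measure Ω} {Y : Ω → ℝ}

lemma ae_pos_of_map_eq_expMeasure (hr : 0 < r) (hYm : Measurable Y)
    (hY : μ.map Y = expMeasure r) : ∀ᵐ ω ∂μ, 0 < Y ω := by
  have hnull : μ (Y ⁻¹' Iic 0) = 0 := by
    rw [← Measure.map_apply hYm measurableSet_Iic, hY, expMeasure_Iic_zero hr]
  filter_upwards [measure_eq_zero_iff_ae_notMem.1 hnull] with ω hω
  simpa using hω

lemma measure_preimage_Ioi_pos_of_map_eq_expMeasure (hr : 0 < r) (hYm : Measurable Y)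
    (hY : μ.map Y = expMeasure r) (y : ℝ) : 0 < μ (Y ⁻¹' Ioi y) := by
  rw [← Measure.map_apply hYm measurableSet_Ioi, hY]
  exact expMeasure_Ioi_pos hr y

lemma exists_measure_le_ne_zero [NeZero μ] (X : Ω → ℝ) : ∃ t : ℝ, μ {ω | X ω ≤ t} ≠ 0 := by
  have hcover : ⋃ n : ℕ, {ω | X ω ≤ n} = univ :=
    eq_univ_of_forall fun ω ↦ mem_iUnion.2 (exists_nat_ge (X ω))
  obtain ⟨n, hn⟩ := exists_measure_pos_of_not_measure_iUnion_null
    (s := fun n : ℕ ↦ {ω | X ω ≤ n}) (by rw [hcover]; exact Measure.measure_univ_ne_zero.2 (NeZero.ne μ))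
  exact ⟨n, hn.ne'⟩

lemma IndepFun.measure_div_lt_pos [NeZero μ] {X : Ω → ℝ} (hXY : IndepFun X Y μ)
    (hY : ∀ y, 0 < μ (Y ⁻¹' Ioi y)) {γ : ℝ} (hγ : 0 < γ) :
    0 < μ {ω | X ω / Y ω < γ} := by
  obtain ⟨t, ht⟩ := exists_measure_le_ne_zero (μ := μ) X
  set y₀ := |t| / γ + 1
  have hy₀ : 0 < y₀ := by positivity
  have hsub : X ⁻¹' Iic t ∩ Y ⁻¹' Ioi y₀ ⊆ {ω | X ω / Y ω < γ} := by
    rintro ω ⟨hX, hY⟩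
    have hYpos : 0 < Y ω := hy₀.trans hY
    rw [mem_ofPred_eq, div_lt_iff₀ hYpos]
    calc X ω ≤ |t| := hX.trans (le_abs_self t)
      _ < γ * y₀ := by rw [mul_add, mul_div_cancel₀ _ hγ.ne']; linarith
      _ < γ * Y ω := mul_lt_mul_of_pos_left hY hγ
  calc 0 < μ (X ⁻¹' Iic t) * μ (Y ⁻¹' Ioi y₀) := ENNReal.mul_pos ht (hY y₀).ne'
    _ = μ (X ⁻¹' Iic t ∩ Y ⁻¹' Ioi y₀) :=
      (hXY.measure_inter_preimage_eq_mul _ _ measurableSet_Iic measurableSet_Ioi).symm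
    _ ≤ μ {ω | X ω / Y ω < γ} := measure_mono hsub

end ProbabilityTheory

lemma mul_div_add_le_div {g l x w y P s : ℝ} (hg : 0 ≤ g) (hl : 0 ≤ l) (hx : 0 ≤ x)
    (hw : 0 ≤ w) (hy : 0 < y) (hP : 0 < P) (hs : 0 ≤ s) :
    g * P * x / (l * w + y * P + s) ≤ g * x / y :=
  calc g * P * x / (l * w + y * P + s) ≤ g * P * x / (y * P) := by
        gcongr
        nlinarith [mul_nonneg hl hw]
    _ = g * x / y := by field_simp

theorem stmt_10_general (a_r lam βr σ0sq γr σre : ℝ)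
    (har : 0 < a_r) (hlam : 0 < lam) (hβr : 0 < βr) (hσ0 : 0 < σ0sq) (hγr : 0 < γr)
    (hσre : 0 < σre)
    (Ω : Type) [MeasureSpace Ω] (hprob : IsProbabilityMeasure (ℙ : Measure Ω))
    (X W Y : Ω → ℝ) (hYm : Measurable Y)
    (hX0 : ∀ᵐ ω ∂(ℙ : Measure Ω), 0 ≤ X ω)
    (hW0 : ∀ᵐ ω ∂(ℙ : Measure Ω), 0 ≤ W ω)
    (hYdist : Measure.map Y (ℙ : Measure Ω) = expMeasure (1 / σre ^ 2))
    (hindep : IndepFun X Y (ℙ : Measure Ω)) :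
    (∀ P : ℝ, 0 < P → ∀ᵐ ω ∂(ℙ : Measure Ω),
      a_r * lam * βr * P * X ω / (lam * βr * W ω + Y ω * P + σ0sq)
        ≤ a_r * lam * βr * X ω / Y ω) ∧
    (∀ P : ℝ, 0 < P →
      (ℙ : Measure Ω) {ω | a_r * lam * βr * X ω / Y ω < γr}
        ≤ (ℙ : Measure Ω) {ω |
            a_r * lam * βr * P * X ω / (lam * βr * W ω + Y ω * P + σ0sq) < γr}) ∧
    0 < (ℙ : Measure Ω) {ω | a_r * lam * βr * X ω / Y ω < γr} := by
  have hr : (0 : ℝ) < 1 / σre ^ 2 := by positivity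
  have sinr_le : ∀ P : ℝ, 0 < P → ∀ᵐ ω ∂(ℙ : Measure Ω),
      a_r * lam * βr * P * X ω / (lam * βr * W ω + Y ω * P + σ0sq)
        ≤ a_r * lam * βr * X ω / Y ω := fun P hP ↦ by
    filter_upwards [hX0, hW0, ae_pos_of_map_eq_expMeasure hr hYm hYdist] with ω hX hW hY
    exact mul_div_add_le_div (by positivity) (by positivity) hX hW hY hP hσ0.le
  refine ⟨sinr_le, fun P hP ↦ measure_mono_ae ?_, ?_⟩
  · filter_upwards [sinr_le P hP] with ω hle hlt
    exact hle.trans_lt hlt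
  · exact (hindep.comp (measurable_const_mul (a_r * lam * βr)) measurable_id).measure_div_lt_pos
      (measure_preimage_Ioi_pos_of_map_eq_expMeasure hr hYm hYdist) hγr

/-- with exponential residual interference `Y` independent of the channel
gain `X`, the ipSIC SINR `γ(P) = a_r·λ·β_r·P·X/(λ·β_r·W + Y·P + σ₀²)` is bounded by
`a_r·λ·β_r·X/Y`, so the outage probability is bounded below by the positive constant
`Pr(a_r·λ·β_r·X/Y < γ̂_r)` for every transmit power `P` (error floor, Remark 2). -/
theorem stmt_10 (a_r lam βr σ0sq γr σre : ℝ)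
    (har : 0 < a_r) (hlam : 0 < lam) (hβr : 0 < βr) (hσ0 : 0 < σ0sq) (hγr : 0 < γr)
    (hσre : 0 < σre)
    (Ω : Type) [MeasureSpace Ω] (hprob : IsProbabilityMeasure (ℙ : Measure Ω))
    (X W Y : Ω → ℝ) (hXm : Measurable X) (hYm : Measurable Y)
    (hX0 : ∀ᵐ ω ∂(ℙ : Measure Ω), 0 ≤ X ω)
    (hW0 : ∀ᵐ ω ∂(ℙ : Measure Ω), 0 ≤ W ω)
    (hYdist : Measure.map Y (ℙ : Measure Ω) = expMeasure (1 / σre ^ 2))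
    (hindep : IndepFun X Y (ℙ : Measure Ω)) :
    (∀ P : ℝ, 0 < P → ∀ᵐ ω ∂(ℙ : Measure Ω),
      a_r * lam * βr * P * X ω / (lam * βr * W ω + Y ω * P + σ0sq)
        ≤ a_r * lam * βr * X ω / Y ω) ∧
    (∀ P : ℝ, 0 < P →
      (ℙ : Measure Ω) {ω | a_r * lam * βr * X ω / Y ω < γr}
        ≤ (ℙ : Measure Ω) {ω |
            a_r * lam * βr * P * X ω / (lam * βr * W ω + Y ω * P + σ0sq) < γr}) ∧
    0 < (ℙ : Measure Ω) {ω | a_r * lam * βr * X ω / Y ω < γr} :=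
  stmt_10_general a_r lam βr σ0sq γr σre har hlam hβr hσ0 hγr hσre Ω hprob X W Y hYm hX0 hW0 hYdist
    hindep
end

section
/- Under the model of the previous setting — a_r, a_t, λ, β_t, P, σ₀², σ_s², η₀, ζ, d_s, α, D, p_t, q_t > 0; X and d independent with X having CDF γ(p_t, √x/q_t)/Γ(p_t) and d having density 2z/D² on [0, D]; γ_t = a_t·λ·β_t·P·G_c/( a_r·λ·β_t·P·G_c + λ·β_t·W + σ₀² ) with G_c = η₀²·(d_s·d)^{−α}·X and W = η₀·d^{−α}·σ_s²·ζ — the ergodic data rate of U_t satisfies E[log₂(1 + γ_t)] = (1/ln 2) · ∫_0^{a_t/a_r} (1/(1 + x)) · [ 1 − ∫_0^D (2z/D²) · γ( p_t, √(T_x(z))/q_t )/Γ(p_t) dz ] dx, where T_x(z) = ( x·d_s^α / (P·(a_t − x·a_r)) ) · ( ζ·σ_s²/η₀ + z^α·σ₀²/(η₀²·β_t·λ) ) for 0 < x < a_t/a_r. -/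
/-!
The SINR `γ_t` lies a.s. in `[0, a_t/a_r)`, so the layer-cake formula with weight `1/(1+x)`
turns `E[ln(1 + γ_t)]` into `∫_0^{a_t/a_r} P(γ_t > x)/(1+x) dx`. For fixed `x`, `γ_t > x` is
equivalent to `X > T_x(d)`; integrating the tail of `X` against the law of the independent `d`
gives `P(γ_t > x) = 1 - ∫_0^D (2z/D²) F_X(T_x(z)) dz`.
-/

open MeasureTheory ProbabilityTheory

/-- The lower incomplete gamma function `γ(p, t) = ∫_0^t u^{p−1} e^{−u} du`. -/
noncomputable def lowerGamma (p t : ℝ) : ℝ :=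
  ∫ u in Set.Ioc (0 : ℝ) t, u ^ (p - 1) * Real.exp (-u)

open Set

lemma lowerGamma_nonneg (p t : ℝ) : 0 ≤ lowerGamma p t :=
  setIntegral_nonneg measurableSet_Ioc fun u hu => by
    have := Real.rpow_nonneg hu.1.le (p - 1)
    positivity

lemma lowerGamma_zero_right (p : ℝ) : lowerGamma p 0 = 0 := by
  simp [lowerGamma]

lemma integral_one_div_one_add {y : ℝ} (hy : -1 < y) :
    ∫ t in (0 : ℝ)..y, 1 / (1 + t) = Real.log (1 + y) := by
  have h0 : (0 : ℝ) ∉ uIcc 1 (1 + y) := by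
    rw [uIcc, mem_Icc, not_and_or, not_le]
    exact Or.inl (lt_min one_pos (by linarith))
  rw [intervalIntegral.integral_comp_add_left (fun u : ℝ => 1 / u), add_zero, integral_one_div h0,
    div_one]

section Probability

variable {Ω β : Type*} [MeasurableSpace Ω] [MeasurableSpace β] {μ : Measure Ω}

lemma lintegral_ofReal_log_one_add_eq_lintegral_meas_lt_mul {Y : Ω → ℝ} (hY : AEMeasurable Y μ)
    (hY0 : 0 ≤ᵐ[μ] Y) :
    ∫⁻ ω, ENNReal.ofReal (Real.log (1 + Y ω)) ∂μ
      = ∫⁻ t in Ioi 0, μ {ω | t < Y ω} * ENNReal.ofReal (1 / (1 + t)) := by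
  rw [← lintegral_comp_eq_lintegral_meas_lt_mul μ hY0 hY]
  · refine lintegral_congr_ae ?_
    filter_upwards [hY0] with ω (hω : 0 ≤ Y ω)
    rw [integral_one_div_one_add (by linarith)]
  · intro t ht
    refine (continuousOn_const.div (continuousOn_const.add continuousOn_id) ?_).intervalIntegrable
    intro s hs
    rw [uIcc_of_le ht.le] at hs
    exact (show (0 : ℝ) < 1 + s by linarith [hs.1]).ne'
  · filter_upwards [self_mem_ae_restrict measurableSet_Ioi] with t (ht : 0 < t)
    positivity

theorem integral_log_one_add_eq_setIntegral_measureReal_lt [IsFiniteMeasure μ] {Y : Ω → ℝ}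
    {b : ℝ} (hY : AEMeasurable Y μ) (hY0 : 0 ≤ᵐ[μ] Y) (hYb : ∀ᵐ ω ∂μ, Y ω < b) :
    ∫ ω, Real.log (1 + Y ω) ∂μ = ∫ t in Ioo 0 b, μ.real {ω | t < Y ω} / (1 + t) := by
  have hlog0 : 0 ≤ᵐ[μ] fun ω => Real.log (1 + Y ω) := by
    filter_upwards [hY0] with ω (hω : 0 ≤ Y ω)
    exact Real.log_nonneg (by linarith)
  have htail0 : 0 ≤ᵐ[volume.restrict (Ioo 0 b)] fun t => μ.real {ω | t < Y ω} / (1 + t) := by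
    filter_upwards [self_mem_ae_restrict measurableSet_Ioo] with t ht
    have := ht.1
    positivity
  have htail_anti : Antitone fun t => μ.real {ω | t < Y ω} :=
    fun s t hst => measureReal_mono fun ω hω => hst.trans_lt hω
  rw [integral_eq_lintegral_of_nonneg_ae hlog0
      (Real.measurable_log.comp_aemeasurable (hY.const_add 1)).aestronglyMeasurable,
    integral_eq_lintegral_of_nonneg_ae htail0
      (htail_anti.measurable.div (measurable_const.add measurable_id)).aestronglyMeasurable,
    lintegral_ofReal_log_one_add_eq_lintegral_meas_lt_mul hY hY0,
    ← Iio_inter_Ioi, ← Measure.restrict_restrict measurableSet_Iio,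
    ← lintegral_indicator measurableSet_Iio]
  congr 1
  refine setLIntegral_congr_fun measurableSet_Ioi fun t (ht : 0 < t) => ?_
  by_cases htb : t < b
  · rw [indicator_of_mem (mem_Iio.2 htb), div_eq_mul_one_div (μ.real _),
      ENNReal.ofReal_mul measureReal_nonneg, ofReal_measureReal]
  · rw [indicator_of_notMem (mt mem_Iio.1 htb),
      measure_mono_null (fun ω hω => ?_) (ae_iff.mp hYb), zero_mul]
    exact not_lt.2 ((not_lt.1 htb).trans (le_of_lt hω))

theorem ProbabilityTheory.IndepFun.measure_comp_lt_eq_lintegral [IsFiniteMeasure μ]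
    {X : Ω → ℝ} {d : Ω → β} (hX : AEMeasurable X μ) (hd : AEMeasurable d μ) (h : IndepFun X d μ)
    {g : β → ℝ} (hg : Measurable g) :
    μ {ω | g (d ω) < X ω} = ∫⁻ z, μ.map X (Ioi (g z)) ∂μ.map d := by
  have hS : MeasurableSet {p : β × ℝ | g p.1 < p.2} :=
    measurableSet_lt (hg.comp measurable_fst) measurable_snd
  calc μ {ω | g (d ω) < X ω} = μ.map (fun ω => (d ω, X ω)) {p | g p.1 < p.2} :=
        (Measure.map_apply_of_aemeasurable (hd.prodMk hX) hS).symm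
    _ = ((μ.map d).prod (μ.map X)) {p | g p.1 < p.2} := by
        rw [(indepFun_iff_map_prod_eq_prod_map_map hd hX).mp h.symm]
    _ = ∫⁻ z, μ.map X (Ioi (g z)) ∂μ.map d := Measure.prod_apply hS

theorem measureReal_comp_lt_eq_one_sub_integral [IsProbabilityMeasure μ] {X : Ω → ℝ}
    {d : Ω → β} (hX : Measurable X) (hd : Measurable d) (h : IndepFun X d μ) {F : ℝ → ℝ}
    (hF0 : ∀ s, 0 ≤ F s) (hcdf : ∀ s, μ {ω | X ω ≤ s} = ENNReal.ofReal (F s))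
    {g : β → ℝ} (hg : Measurable g) :
    μ.real {ω | g (d ω) < X ω} = 1 - ∫ z, F (g z) ∂μ.map d := by
  have hF1 (s : ℝ) : F s ≤ 1 := ENNReal.ofReal_le_one.mp (hcdf s ▸ prob_le_one)
  have hF : F = fun s => μ.real {ω | X ω ≤ s} := by
    ext s
    rw [measureReal_def, hcdf, ENNReal.toReal_ofReal (hF0 s)]
  have hFm : Measurable F :=
    hF ▸ Monotone.measurable fun s t hst => measureReal_mono fun ω hω => le_trans hω hst
  have htail (s : ℝ) : μ.map X (Ioi s) = ENNReal.ofReal (1 - F s) := by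
    rw [Measure.map_apply hX measurableSet_Ioi, ENNReal.ofReal_sub _ (hF0 s), ← hcdf,
      ENNReal.ofReal_one, ← prob_compl_eq_one_sub (measurableSet_le hX measurable_const)]
    congr 1
    ext ω
    simp
  have : IsProbabilityMeasure (μ.map d) := Measure.isProbabilityMeasure_map hd.aemeasurable
  have hint : Integrable (fun z => F (g z)) (μ.map d) :=
    Integrable.of_bound (hFm.comp hg).aestronglyMeasurable 1
      (ae_of_all _ fun z => by rw [Real.norm_of_nonneg (hF0 _)]; exact hF1 _)
  rw [measureReal_def, h.measure_comp_lt_eq_lintegral hX.aemeasurable hd.aemeasurable hg]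
  simp_rw [htail]
  rw [← integral_eq_lintegral_of_nonneg_ae (ae_of_all _ fun z => sub_nonneg.2 (hF1 _))
      (measurable_const.sub (hFm.comp hg)).aestronglyMeasurable,
    integral_sub (integrable_const 1) hint, integral_const, probReal_univ, one_smul]

theorem integral_withDensity_ofReal {ν : Measure β} {ρ : β → ℝ} (hρ : Measurable ρ)
    (hρ0 : 0 ≤ᵐ[ν] ρ) (f : β → ℝ) :
    ∫ z, f z ∂ν.withDensity (fun z => ENNReal.ofReal (ρ z)) = ∫ z, ρ z * f z ∂ν := by
  rw [integral_withDensity_eq_integral_toReal_smul hρ.ennreal_ofReal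
    (ae_of_all _ fun _ => ENNReal.ofReal_lt_top)]
  refine integral_congr_ae ?_
  filter_upwards [hρ0] with z hz
  rw [ENNReal.toReal_ofReal hz, smul_eq_mul]

lemma ae_pos_of_map_eq_withDensity_Icc {d : Ω → ℝ} (hd : AEMeasurable d μ) {D : ℝ}
    {f : ℝ → ENNReal} (h : μ.map d = (volume.restrict (Icc 0 D)).withDensity f) :
    ∀ᵐ ω ∂μ, 0 < d ω := by
  refine ae_of_ae_map hd ?_
  rw [h, ← Measure.restrict_congr_set Ioc_ae_eq_Icc]
  exact (withDensity_absolutelyContinuous _ _).ae_le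
    (ae_restrict_of_forall_mem measurableSet_Ioc fun z hz => hz.1)

lemma measure_le_eq_ofReal_of_nonneg_ae {X : Ω → ℝ} (hX0 : 0 ≤ᵐ[μ] X) {F : ℝ → ℝ}
    (hF : ∀ s < 0, F s = 0) (hcdf : ∀ s, 0 ≤ s → μ {ω | X ω ≤ s} = ENNReal.ofReal (F s))
    (s : ℝ) : μ {ω | X ω ≤ s} = ENNReal.ofReal (F s) := by
  rcases le_or_gt 0 s with hs | hs
  · exact hcdf s hs
  · rw [hF s hs, ENNReal.ofReal_zero]
    exact measure_mono_null (fun ω (hω : X ω ≤ s) => not_le.2 (hω.trans_lt hs))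
      (ae_iff.mp hX0)

end Probability

lemma mul_div_add_lt_div {a b g n : ℝ} (ha : 0 < a) (hb : 0 < b) (hg : 0 ≤ g) (hn : 0 < n) :
    a * g / (b * g + n) < a / b := by
  rw [div_lt_div_iff₀ (by positivity) hb]
  nlinarith [mul_pos ha hn]

lemma lt_mul_div_add_iff {a b g n x : ℝ} (hb : 0 ≤ b) (hg : 0 ≤ g) (hn : 0 < n)
    (hx : x * b < a) : x < a * g / (b * g + n) ↔ x * n / (a - x * b) < g := by
  rw [lt_div_iff₀ (by positivity), div_lt_iff₀ (sub_pos.2 hx)]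
  constructor <;> intro h <;> linarith

section Sinr

variable {a_r a_t lam βt P σ0sq : ℝ}

lemma sinr_mem_Ico (har : 0 < a_r) (hat : 0 < a_t) (hlam : 0 < lam) (hβt : 0 < βt) (hP : 0 < P)
    (hσ0 : 0 < σ0sq) {Gc W : ℝ} (hGc : 0 ≤ Gc) (hW : 0 ≤ W) :
    a_t * lam * βt * P * Gc / (a_r * lam * βt * P * Gc + lam * βt * W + σ0sq)
      ∈ Ico 0 (a_t / a_r) := by
  have e : a_t * lam * βt * P * Gc / (a_r * lam * βt * P * Gc + lam * βt * W + σ0sq)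
      = a_t * (lam * βt * P * Gc) / (a_r * (lam * βt * P * Gc) + (lam * βt * W + σ0sq)) := by
    ring
  rw [e]
  exact ⟨by positivity, mul_div_add_lt_div hat har (by positivity) (by positivity)⟩

lemma lt_sinr_iff_threshold_lt {σssq η0 ζ ds α : ℝ} (har : 0 < a_r) (hlam : 0 < lam)
    (hβt : 0 < βt) (hP : 0 < P) (hσ0 : 0 < σ0sq) (hσs : 0 < σssq) (hη0 : 0 < η0) (hζ : 0 < ζ)
    (hds : 0 < ds) {x z g Gc W : ℝ} (hz : 0 < z) (hg : 0 ≤ g) (hx : x * a_r < a_t)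
    (hGc : Gc = η0 ^ 2 * (ds * z) ^ (-α) * g) (hW : W = η0 * z ^ (-α) * σssq * ζ) :
    x < a_t * lam * βt * P * Gc / (a_r * lam * βt * P * Gc + lam * βt * W + σ0sq) ↔
      x * ds ^ α / (P * (a_t - x * a_r)) * (ζ * σssq / η0 + z ^ α * σ0sq / (η0 ^ 2 * βt * lam))
        < g := by
  have hK : 0 < lam * βt * P * η0 ^ 2 * (ds * z) ^ (-α) := by positivity
  have e : a_t * lam * βt * P * Gc / (a_r * lam * βt * P * Gc + lam * βt * W + σ0sq)
      = a_t * (lam * βt * P * η0 ^ 2 * (ds * z) ^ (-α) * g)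
        / (a_r * (lam * βt * P * η0 ^ 2 * (ds * z) ^ (-α) * g) + (lam * βt * W + σ0sq)) := by
    rw [hGc]
    ring
  rw [e, lt_mul_div_add_iff har.le (by positivity) (by rw [hW]; positivity) hx,
    ← div_lt_iff₀' hK, hW]
  refine iff_of_eq (congrArg (· < g) ?_)
  have : z ^ α ≠ 0 := (Real.rpow_pos_of_pos hz α).ne'
  have : ds ^ α ≠ 0 := (Real.rpow_pos_of_pos hds α).ne'
  have : a_t - x * a_r ≠ 0 := (sub_pos.2 hx).ne'
  rw [Real.mul_rpow hds.le hz.le, Real.rpow_neg hds.le, Real.rpow_neg hz.le]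
  field_simp

end Sinr

theorem stmt_15_general (a_r a_t lam βt P σ0sq σssq η0 ζ ds α D p_t q_t : ℝ)
    (har : 0 < a_r) (hat : 0 < a_t) (hlam : 0 < lam) (hβt : 0 < βt)
    (hP : 0 < P) (hσ0 : 0 < σ0sq) (hσs : 0 < σssq) (hη0 : 0 < η0) (hζ : 0 < ζ)
    (hds : 0 < ds) (hp : 0 < p_t)
    (T : ℝ → ℝ → ℝ)
    (hT : ∀ x : ℝ, 0 < x → x < a_t / a_r → ∀ z : ℝ,
      T x z = x * ds ^ α / (P * (a_t - x * a_r)) *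
        (ζ * σssq / η0 + z ^ α * σ0sq / (η0 ^ 2 * βt * lam)))
    (Ω : Type) [MeasureSpace Ω] (hprob : IsProbabilityMeasure (ℙ : Measure Ω))
    (X d : Ω → ℝ) (hXm : Measurable X) (hdm : Measurable d)
    (hindep : IndepFun X d (ℙ : Measure Ω))
    (hX0 : ∀ᵐ ω ∂(ℙ : Measure Ω), 0 ≤ X ω)
    (hXcdf : ∀ x : ℝ, 0 ≤ x → (ℙ : Measure Ω) {ω | X ω ≤ x}
      = ENNReal.ofReal (lowerGamma p_t (Real.sqrt x / q_t) / Real.Gamma p_t))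
    (hd : Measure.map d (ℙ : Measure Ω) = (volume.restrict (Set.Icc 0 D)).withDensity
      (fun z => ENNReal.ofReal (2 * z / D ^ 2)))
    (Gc W : Ω → ℝ)
    (hGc : ∀ ω, Gc ω = η0 ^ 2 * (ds * d ω) ^ (-α) * X ω)
    (hW : ∀ ω, W ω = η0 * d ω ^ (-α) * σssq * ζ) :
    ∫ ω, Real.logb 2 (1 +
        a_t * lam * βt * P * Gc ω /
          (a_r * lam * βt * P * Gc ω + lam * βt * W ω + σ0sq)) ∂(ℙ : Measure Ω)
      = (1 / Real.log 2) * ∫ x in Set.Ioo (0 : ℝ) (a_t / a_r),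
          1 / (1 + x) * (1 - ∫ z in Set.Icc (0 : ℝ) D,
            2 * z / D ^ 2 *
              (lowerGamma p_t (Real.sqrt (T x z) / q_t) / Real.Gamma p_t)) := by
  set F : ℝ → ℝ := fun s => lowerGamma p_t (Real.sqrt s / q_t) / Real.Gamma p_t
  set Y : Ω → ℝ := fun ω =>
    a_t * lam * βt * P * Gc ω / (a_r * lam * βt * P * Gc ω + lam * βt * W ω + σ0sq)
  have hF0 (s : ℝ) : 0 ≤ F s := div_nonneg (lowerGamma_nonneg _ _) (Real.Gamma_pos_of_pos hp).le
  have hcdf := measure_le_eq_ofReal_of_nonneg_ae hX0 (F := F)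
    (fun s hs => by simp [F, Real.sqrt_eq_zero'.2 hs.le, lowerGamma_zero_right]) hXcdf
  have hd0 : ∀ᵐ ω, 0 < d ω := ae_pos_of_map_eq_withDensity_Icc hdm.aemeasurable hd
  have hY : ∀ᵐ ω, Y ω ∈ Ico 0 (a_t / a_r) := by
    filter_upwards [hd0, hX0] with ω hdω hXω
    exact sinr_mem_Ico har hat hlam hβt hP hσ0 (by rw [hGc]; positivity) (by rw [hW]; positivity)
  have hYm : Measurable Y := by
    simp only [Y, funext hGc, funext hW]
    fun_prop
  have hsurv : ∀ x ∈ Ioo 0 (a_t / a_r), (ℙ : Measure Ω).real {ω | x < Y ω}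
      = 1 - ∫ z in Icc 0 D, 2 * z / D ^ 2 * F (T x z) := by
    rintro x ⟨hx0, hxb⟩
    have hTm : Measurable (T x) := by
      rw [show T x = _ from funext (hT x hx0 hxb)]
      fun_prop
    have hevent : {ω | x < Y ω} =ᵐ[ℙ] {ω | T x (d ω) < X ω} := by
      refine Filter.eventuallyEq_set.2 ?_
      filter_upwards [hd0, hX0] with ω hdω hXω
      rw [hT x hx0 hxb]
      exact lt_sinr_iff_threshold_lt har hlam hβt hP hσ0 hσs hη0 hζ hds hdω hXω
        ((lt_div_iff₀ har).1 hxb) (hGc ω) (hW ω)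
    rw [measureReal_congr hevent,
      measureReal_comp_lt_eq_one_sub_integral hXm hdm hindep hF0 hcdf hTm,
      hd, integral_withDensity_ofReal (by fun_prop)
        (ae_restrict_of_forall_mem measurableSet_Icc fun z hz => by have := hz.1; positivity)]
  calc ∫ ω, Real.logb 2 (1 + Y ω)
        = (∫ ω, Real.log (1 + Y ω)) / Real.log 2 := integral_div _ _
    _ = (∫ x in Ioo 0 (a_t / a_r), (ℙ : Measure Ω).real {ω | x < Y ω} / (1 + x))
          / Real.log 2 := by
        rw [integral_log_one_add_eq_setIntegral_measureReal_lt hYm.aemeasurable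
          (hY.mono fun _ h => h.1) (hY.mono fun _ h => h.2)]
    _ = (∫ x in Ioo 0 (a_t / a_r),
          1 / (1 + x) * (1 - ∫ z in Icc 0 D, 2 * z / D ^ 2 * F (T x z))) / Real.log 2 := by
        congr 1
        exact setIntegral_congr_fun measurableSet_Ioo fun x hx => by rw [hsurv x hx]; ring
    _ = _ := by rw [div_eq_inv_mul, one_div]

/-- exact integral content of Theorem 4 ((D.2)–(D.3)): the ergodic rate
of the weak user `U_t` equals
`(1/ln 2)∫_0^{a_t/a_r} (1/(1+x))[1 − ∫_0^D (2z/D²)γ(p_t,√T_x(z)/q_t)/Γ(p_t) dz] dx`. -/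
theorem stmt_15 (a_r a_t lam βt P σ0sq σssq η0 ζ ds α D p_t q_t : ℝ)
    (har : 0 < a_r) (hat : 0 < a_t) (hlam : 0 < lam) (hβt : 0 < βt)
    (hP : 0 < P) (hσ0 : 0 < σ0sq) (hσs : 0 < σssq) (hη0 : 0 < η0) (hζ : 0 < ζ)
    (hds : 0 < ds) (hα : 0 < α) (hD : 0 < D) (hp : 0 < p_t) (hq : 0 < q_t)
    (T : ℝ → ℝ → ℝ)
    (hT : ∀ x : ℝ, 0 < x → x < a_t / a_r → ∀ z : ℝ,
      T x z = x * ds ^ α / (P * (a_t - x * a_r)) *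
        (ζ * σssq / η0 + z ^ α * σ0sq / (η0 ^ 2 * βt * lam)))
    (Ω : Type) [MeasureSpace Ω] (hprob : IsProbabilityMeasure (ℙ : Measure Ω))
    (X d : Ω → ℝ) (hXm : Measurable X) (hdm : Measurable d)
    (hindep : IndepFun X d (ℙ : Measure Ω))
    (hX0 : ∀ᵐ ω ∂(ℙ : Measure Ω), 0 ≤ X ω)
    (hXcdf : ∀ x : ℝ, 0 ≤ x → (ℙ : Measure Ω) {ω | X ω ≤ x}
      = ENNReal.ofReal (lowerGamma p_t (Real.sqrt x / q_t) / Real.Gamma p_t))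
    (hd : Measure.map d (ℙ : Measure Ω) = (volume.restrict (Set.Icc 0 D)).withDensity
      (fun z => ENNReal.ofReal (2 * z / D ^ 2)))
    (Gc W : Ω → ℝ)
    (hGc : ∀ ω, Gc ω = η0 ^ 2 * (ds * d ω) ^ (-α) * X ω)
    (hW : ∀ ω, W ω = η0 * d ω ^ (-α) * σssq * ζ) :
    ∫ ω, Real.logb 2 (1 +
        a_t * lam * βt * P * Gc ω /
          (a_r * lam * βt * P * Gc ω + lam * βt * W ω + σ0sq)) ∂(ℙ : Measure Ω)
      = (1 / Real.log 2) * ∫ x in Set.Ioo (0 : ℝ) (a_t / a_r),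
          1 / (1 + x) * (1 - ∫ z in Set.Icc (0 : ℝ) D,
            2 * z / D ^ 2 *
              (lowerGamma p_t (Real.sqrt (T x z) / q_t) / Real.Gamma p_t)) :=
  stmt_15_general a_r a_t lam βt P σ0sq σssq η0 ζ ds α D p_t q_t har hat hlam hβt hP hσ0 hσs hη0 hζ
    hds hp T hT Ω hprob X d hXm hdm hindep hX0 hXcdf hd Gc W hGc hW
end
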